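/- Let G be a connected finite vertex-transitive graph with 2n vertices admitting a fixed-point-free automorphism T such that T(X₀) = V(G) \ X₀ for some subset X₀. Then for every subset X ⊆ V(G) with |X| = n, one has σ_X = σ_{X̄}. -/
import Mathlib

open Finset

def VertexTransitive {V : Type*} (G : SimpleGraph V) : Prop :=
  ∀ u v : V, ∃ φ : G ≃g G, φ u = v

/-- Twice the auto-correlation function of `S`: the number of ordered pairs of
vertices of `S` at path-distance `k`. -/
noncomputable def pairCount {V : Type*} (G : SimpleGraph V) (S : Finset V) (k : ℕ) : ℕ :=
  ((S ×ˢ S).filter fun p => G.dist p.1 p.2 = k).card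

private lemma iso_dist_le {V : Type*} (G : SimpleGraph V) (hconn : G.Connected)
    (φ : G ≃g G) (u v : V) : G.dist (φ u) (φ v) ≤ G.dist u v := by
  obtain ⟨p, hp⟩ := hconn.exists_walk_length_eq_dist u v
  calc G.dist (φ u) (φ v) ≤ (p.map φ.toHom).length := SimpleGraph.dist_le _
    _ = G.dist u v := by rw [SimpleGraph.Walk.length_map]; exact hp

private lemma iso_dist {V : Type*} (G : SimpleGraph V) (hconn : G.Connected)
    (φ : G ≃g G) (u v : V) : G.dist (φ u) (φ v) = G.dist u v := by
  refine le_antisymm (iso_dist_le G hconn φ u v) ?_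
  have := iso_dist_le G hconn φ.symm (φ u) (φ v)
  simpa using this

/-- number of vertices at distance k from u -/
private noncomputable def sphere {V : Type*} [Fintype V] [DecidableEq V]
    (G : SimpleGraph V) (u : V) (k : ℕ) : ℕ :=
  (univ.filter fun b => G.dist u b = k).card

private lemma sphere_const {V : Type*} [Fintype V] [DecidableEq V]
    (G : SimpleGraph V) (hconn : G.Connected) (htrans : VertexTransitive G)
    (u v : V) (k : ℕ) : sphere G u k = sphere G v k := by
  obtain ⟨φ, hφ⟩ := htrans u v
  unfold sphere
  apply Finset.card_bij (fun b _ => φ b)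
  · intro b hb
    simp only [mem_filter, mem_univ, true_and] at hb ⊢
    rw [← hφ, iso_dist G hconn]
    exact hb
  · intro a _ b _ h
    exact φ.toEquiv.injective h
  · intro b hb
    refine ⟨φ.symm b, ?_, by simp⟩
    simp only [mem_filter, mem_univ, true_and] at hb ⊢
    rw [← iso_dist G hconn φ, hφ]
    simpa using hb

/-- mixed pair count -/
private noncomputable def mixCount {V : Type*} [Fintype V] [DecidableEq V]
    (G : SimpleGraph V) (A B : Finset V) (k : ℕ) : ℕ :=
  ((A ×ˢ B).filter fun p => G.dist p.1 p.2 = k).card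

private lemma mixCount_comm {V : Type*} [Fintype V] [DecidableEq V]
    (G : SimpleGraph V) (A B : Finset V) (k : ℕ) :
    mixCount G A B k = mixCount G B A k := by
  unfold mixCount
  apply Finset.card_bij (fun p _ => (p.2, p.1))
  · intro p hp
    simp only [mem_filter, mem_product] at hp ⊢
    exact ⟨⟨hp.1.2, hp.1.1⟩, by rw [SimpleGraph.dist_comm]; exact hp.2⟩
  · intro p _ q _ h
    simpa [Prod.ext_iff, and_comm] using h
  · intro p hp
    simp only [mem_filter, mem_product] at hp
    refine ⟨(p.2, p.1), ?_, rfl⟩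
    simp only [mem_filter, mem_product]
    exact ⟨⟨hp.1.2, hp.1.1⟩, by rw [SimpleGraph.dist_comm]; exact hp.2⟩

private lemma mixCount_split {V : Type*} [Fintype V] [DecidableEq V]
    (G : SimpleGraph V) (A : Finset V) (k : ℕ) :
    mixCount G A univ k = mixCount G A A k + mixCount G A Aᶜ k := by
  unfold mixCount
  rw [← Finset.card_union_of_disjoint, ← Finset.filter_union, ← Finset.product_union]
  · congr 2
    simp
  · apply Finset.disjoint_filter_filter
    rw [Finset.disjoint_left]
    intro p hp hp'
    simp only [mem_product, mem_compl] at hp hp'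
    exact hp'.2 hp.2

private lemma mixCount_univ {V : Type*} [Fintype V] [DecidableEq V]
    (G : SimpleGraph V) (A : Finset V) (u : V) (k : ℕ)
    (h : ∀ a : V, sphere G a k = sphere G u k) :
    mixCount G A univ k = A.card * sphere G u k := by
  unfold mixCount
  rw [Finset.card_filter, Finset.sum_product]
  have : ∀ a ∈ A, (∑ b : V, if G.dist a b = k then 1 else 0) = sphere G u k := by
    intro a _
    rw [← h a]
    unfold sphere
    rw [Finset.card_filter]
  rw [Finset.sum_congr rfl this, Finset.sum_const, smul_eq_mul]

/-- Let `G` be a connected finite vertex-transitive graph on `2n` vertices with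
a fixed-point-free automorphism `T` sending some subset `X₀` to its complement.
Then every `n`-element subset `X` satisfies `σ_X = σ_{X̄}`. -/
theorem half_subset_autocorrelation
    {V : Type*} [Fintype V] [DecidableEq V] (G : SimpleGraph V) (n : ℕ)
    (hconn : G.Connected) (htrans : VertexTransitive G)
    (hcard : Fintype.card V = 2 * n)
    (T : G ≃g G) (hfree : ∀ w : V, T w ≠ w)
    (X₀ : Finset V) (hX₀ : X₀.image T = X₀ᶜ)
    (X : Finset V) (hX : X.card = n) :
    ∀ k : ℕ, pairCount G X k = pairCount G Xᶜ k := by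
  intro k
  have hu : Nonempty V := hconn.nonempty
  obtain ⟨u⟩ := hu
  have hsph : ∀ a : V, sphere G a k = sphere G u k :=
    fun a => sphere_const G hconn htrans a u k
  have hXc : Xᶜ.card = n := by
    rw [Finset.card_compl, hX, hcard]; omega
  have h1 : mixCount G X univ k = mixCount G X X k + mixCount G X Xᶜ k :=
    mixCount_split G X k
  have h2 : mixCount G Xᶜ univ k = mixCount G Xᶜ Xᶜ k + mixCount G Xᶜ Xᶜᶜ k :=
    mixCount_split G Xᶜ k
  rw [compl_compl] at h2
  have h3 : mixCount G X Xᶜ k = mixCount G Xᶜ X k := mixCount_comm G X Xᶜ k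
  have h4 : mixCount G X univ k = n * sphere G u k := by
    rw [mixCount_univ G X u k hsph, hX]
  have h5 : mixCount G Xᶜ univ k = n * sphere G u k := by
    rw [mixCount_univ G Xᶜ u k hsph, hXc]
  have hp1 : pairCount G X k = mixCount G X X k := rfl
  have hp2 : pairCount G Xᶜ k = mixCount G Xᶜ Xᶜ k := rfl
  omega
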